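/- Let K be a field with char K ≠ 2 and char K ≠ 3, let (V, c) be a braided vector space over K such that c is of Hecke type of mark 1 (i.e. c² = id_{V⊗V}), and let b be a c-bracket on (V, c). If the canonical K-linear map ι_{c,b} : V → U(V, c, b) (formed with λ = 1) is injective, then b ∘ c = −b and b ∘ b₁ ∘ (id_{V⊗V⊗V} − c₂ + c₂ ∘ c₁) = 0; that is, (V, c, b) is a generalized Lie algebra in the sense of Gurevich. -/

import Mathlib

open TensorProduct

noncomputable section

variable {K : Type*} [Field K] {V : Type*} [AddCommGroup V] [Module K V]

/-- The endomorphism `c ⊗ id_V` of `V ⊗ (V ⊗ V)` (transported along associativity). -/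
def opC1 (c : V ⊗[K] V →ₗ[K] V ⊗[K] V) :
    V ⊗[K] (V ⊗[K] V) →ₗ[K] V ⊗[K] (V ⊗[K] V) :=
  (TensorProduct.assoc K V V V).toLinearMap ∘ₗ
    LinearMap.rTensor V c ∘ₗ (TensorProduct.assoc K V V V).symm.toLinearMap

/-- The endomorphism `id_V ⊗ c` of `V ⊗ (V ⊗ V)`. -/
def opC2 (c : V ⊗[K] V →ₗ[K] V ⊗[K] V) :
    V ⊗[K] (V ⊗[K] V) →ₗ[K] V ⊗[K] (V ⊗[K] V) :=
  LinearMap.lTensor V c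

/-- The map `b ⊗ id_V : V ⊗ (V ⊗ V) → V ⊗ V`. -/
def opB1 (b : V ⊗[K] V →ₗ[K] V) :
    V ⊗[K] (V ⊗[K] V) →ₗ[K] V ⊗[K] V :=
  LinearMap.rTensor V b ∘ₗ (TensorProduct.assoc K V V V).symm.toLinearMap

/-- The map `id_V ⊗ b : V ⊗ (V ⊗ V) → V ⊗ V`. -/
def opB2 (b : V ⊗[K] V →ₗ[K] V) :
    V ⊗[K] (V ⊗[K] V) →ₗ[K] V ⊗[K] V :=
  LinearMap.lTensor V b

/-- The braid equation `c₁ ∘ c₂ ∘ c₁ = c₂ ∘ c₁ ∘ c₂`. -/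
def BraidEq (c : V ⊗[K] V →ₗ[K] V ⊗[K] V) : Prop :=
  opC1 c ∘ₗ opC2 c ∘ₗ opC1 c = opC2 c ∘ₗ opC1 c ∘ₗ opC2 c

/-- `c` is of Hecke type of mark `lam`: `(c + id) ∘ (c - lam • id) = 0`. -/
def IsHecke (lam : K) (c : V ⊗[K] V →ₗ[K] V ⊗[K] V) : Prop :=
  (c + LinearMap.id) ∘ₗ (c - lam • LinearMap.id) = 0

/-- `b` is a `c`-bracket: `c ∘ b₁ = b₂ ∘ c₁ ∘ c₂` and `c ∘ b₂ = b₁ ∘ c₂ ∘ c₁`. -/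
def IsBracket (c : V ⊗[K] V →ₗ[K] V ⊗[K] V) (b : V ⊗[K] V →ₗ[K] V) : Prop :=
  c ∘ₗ opB1 b = opB2 b ∘ₗ opC1 c ∘ₗ opC2 c ∧
  c ∘ₗ opB2 b = opB1 b ∘ₗ opC2 c ∘ₗ opC1 c

/-- The linear map `V ⊗ V → T(V)`, `v ⊗ w ↦ ι v * ι w`. -/
def tensMul : V ⊗[K] V →ₗ[K] TensorAlgebra K V :=
  LinearMap.mul' K (TensorAlgebra K V) ∘ₗ
    TensorProduct.map (TensorAlgebra.ι K) (TensorAlgebra.ι K)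

/-- The relation on `T(V)` whose associated ring quotient is
`U(V,c,b) = T(V)/(c(z) - lam•z - b(z) : z ∈ V ⊗ V)`. -/
def envRel (lam : K) (c : V ⊗[K] V →ₗ[K] V ⊗[K] V) (b : V ⊗[K] V →ₗ[K] V) :
    TensorAlgebra K V → TensorAlgebra K V → Prop :=
  fun x y => ∃ z : V ⊗[K] V,
    x = tensMul (c z) ∧ y = lam • tensMul z + TensorAlgebra.ι K (b z)

/-- The canonical map `ι_{c,b} : V → U(V,c,b)`. -/
def envIota (lam : K) (c : V ⊗[K] V →ₗ[K] V ⊗[K] V) (b : V ⊗[K] V →ₗ[K] V) :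
    V →ₗ[K] RingQuot (envRel lam c b) :=
  (RingQuot.mkAlgHom K (envRel lam c b)).toLinearMap ∘ₗ TensorAlgebra.ι K

/-- The q-integer `(n)_lam = 1 + lam + ⋯ + lam^(n-1)`. -/
def qInt (lam : K) (n : ℕ) : K := ∑ i ∈ Finset.range n, lam ^ i

/-- The q-factorial `(n)!_lam = (1)_lam (2)_lam ⋯ (n)_lam`. -/
def qFac (lam : K) (n : ℕ) : K := ∏ i ∈ Finset.range n, qInt lam (i + 1)

/-! Both identities already hold after applying any linear map `ι : V → A` into an associative
algebra for which `μ₂ (v ⊗ w) := ι v * ι w` satisfies the defining relation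
`μ₂ ∘ c = λ μ₂ + ι ∘ b` of `U(V, c, b)`; injectivity of `ι` then removes `ι`.
Evaluating `μ₂` on `c (c z)` once through the relation and once through
`c² = (λ - 1) c + λ` gives `ι (b (c z)) = -ι (b z)`. For `λ = 1`, expanding the triple product
`μ₃` on both sides of the braid relation `c₁c₂c₁ = c₂c₁c₂` with the relation and the bracket
axioms leaves an identity between `μ₂`- and `ι`-terms; at `c₂ y` the `μ₂`-terms cancel and the
Jacobi-type identity survives. -/

open LinearMap

section Embedding

variable {A : Type*} [Ring A] [Algebra K A] (ι : V →ₗ[K] A)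

def mul₂ : V ⊗[K] V →ₗ[K] A := mul' K A ∘ₗ TensorProduct.map ι ι

def mul₃ : V ⊗[K] (V ⊗[K] V) →ₗ[K] A := mul' K A ∘ₗ TensorProduct.map ι (mul₂ ι)

@[simp]
lemma mul₂_tmul (v w : V) : mul₂ ι (v ⊗ₜ w) = ι v * ι w := by
  simp [mul₂]

@[simp]
lemma mul₃_tmul (u : V) (z : V ⊗[K] V) : mul₃ ι (u ⊗ₜ z) = ι u * mul₂ ι z := by
  simp [mul₃]

lemma mul₃_assoc_tmul (z : V ⊗[K] V) (w : V) :
    mul₃ ι (TensorProduct.assoc K V V V (z ⊗ₜ w)) = mul₂ ι z * ι w := by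
  induction z using TensorProduct.induction_on with
  | zero => simp
  | tmul u v => simp [mul_assoc]
  | add x y hx hy => simp [TensorProduct.add_tmul, hx, hy, add_mul]

variable {ι} {lam : K} {c : V ⊗[K] V →ₗ[K] V ⊗[K] V} {b : V ⊗[K] V →ₗ[K] V}

lemma mul₃_opC2 (hrel : ∀ z, mul₂ ι (c z) = lam • mul₂ ι z + ι (b z)) (y : V ⊗[K] (V ⊗[K] V)) :
    mul₃ ι (opC2 c y) = lam • mul₃ ι y + mul₂ ι (opB2 b y) := by
  induction y using TensorProduct.induction_on with
  | zero => simp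
  | tmul u z => simp [opC2, opB2, hrel, mul_add]
  | add x y hx hy => simp only [map_add, hx, hy, smul_add]; abel

lemma mul₃_opC1 (hrel : ∀ z, mul₂ ι (c z) = lam • mul₂ ι z + ι (b z)) (y : V ⊗[K] (V ⊗[K] V)) :
    mul₃ ι (opC1 c y) = lam • mul₃ ι y + mul₂ ι (opB1 b y) := by
  suffices mul₃ ι ∘ₗ opC1 c = lam • mul₃ ι + mul₂ ι ∘ₗ opB1 b from congr($this y)
  refine TensorProduct.ext_threefold' fun u v w => ?_
  simp [opC1, opB1, mul₃_assoc_tmul, hrel, add_mul, mul_assoc]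

lemma IsHecke.apply_apply (h : IsHecke lam c) (z : V ⊗[K] V) :
    c (c z) = (lam - 1) • c z + lam • z := by
  have hz := congr($h z)
  simp only [comp_apply, LinearMap.add_apply, LinearMap.sub_apply, LinearMap.smul_apply,
    id_apply, map_sub, map_smul, LinearMap.zero_apply] at hz
  linear_combination (norm := module) hz

lemma IsHecke.map_bracket_braiding_eq_neg (hH : IsHecke lam c)
    (hrel : ∀ z, mul₂ ι (c z) = lam • mul₂ ι z + ι (b z)) (z : V ⊗[K] V) :
    ι (b (c z)) = -ι (b z) := by
  have h₁ : mul₂ ι (c (c z)) = lam • (lam • mul₂ ι z + ι (b z)) + ι (b (c z)) := by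
    rw [hrel, hrel]
  have h₂ : mul₂ ι (c (c z)) = (lam - 1) • (lam • mul₂ ι z + ι (b z)) + lam • mul₂ ι z := by
    rw [hH.apply_apply, map_add, map_smul, map_smul, hrel]
  linear_combination (norm := module) h₂ - h₁

lemma BraidEq.mul₂_bracket_relation (hbraid : BraidEq c) (hb : IsBracket c b)
    (hrel : ∀ z, mul₂ ι (c z) = mul₂ ι z + ι (b z)) (y : V ⊗[K] (V ⊗[K] V)) :
    mul₂ ι (opB2 b (opC1 c y)) + ι (b (opB2 b y)) =
      mul₂ ι (opB1 b (opC2 c y)) + ι (b (opB1 b y)) := by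
  have hrel' : ∀ z, mul₂ ι (c z) = (1 : K) • mul₂ ι z + ι (b z) := by simpa using hrel
  have hc1 (y') : opB2 b (opC1 c (opC2 c y')) = c (opB1 b y') := congr($(hb.1) y').symm
  have hc2 (y') : opB1 b (opC2 c (opC1 c y')) = c (opB2 b y') := congr($(hb.2) y').symm
  have h := congr(mul₃ ι ($hbraid y))
  simp only [comp_apply, mul₃_opC1 hrel', mul₃_opC2 hrel', one_smul, hc1, hc2, hrel] at h
  linear_combination (norm := module) h

lemma BraidEq.map_bracket_jacobi (hbraid : BraidEq c) (hcc : ∀ z, c (c z) = z)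
    (hb : IsBracket c b) (hbc : b ∘ₗ c = -b) (hrel : ∀ z, mul₂ ι (c z) = mul₂ ι z + ι (b z))
    (y : V ⊗[K] (V ⊗[K] V)) :
    ι (b (opB1 b (y - opC2 c y + opC2 c (opC1 c y)))) = 0 := by
  have hc1 : opB2 b (opC1 c (opC2 c y)) = c (opB1 b y) := congr($(hb.1) y).symm
  have hc2 : opB1 b (opC2 c (opC1 c y)) = c (opB2 b y) := congr($(hb.2) y).symm
  have hc22 : opC2 c (opC2 c y) = y := by
    rw [opC2, ← comp_apply, ← lTensor_comp, show c ∘ₗ c = LinearMap.id from ext hcc, lTensor_id,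
      id_apply]
  have hb22 : opB2 b (opC2 c y) = -opB2 b y := by
    rw [opB2, opC2, ← comp_apply, ← lTensor_comp, hbc, lTensor_neg, LinearMap.neg_apply]
  have h := hbraid.mul₂_bracket_relation hb hrel (opC2 c y)
  rw [hc1, hc22, hb22, hrel, map_neg, map_neg] at h
  have hbcb : b (c (opB2 b y)) = -b (opB2 b y) := congr($hbc (opB2 b y))
  simp only [map_add, map_sub, hc2, hbcb, map_neg]
  linear_combination (norm := module) h

end Embedding

lemma mul₂_envIota_apply (lam : K) (c : V ⊗[K] V →ₗ[K] V ⊗[K] V) (b : V ⊗[K] V →ₗ[K] V)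
    (z : V ⊗[K] V) :
    mul₂ (envIota lam c b) (c z) = lam • mul₂ (envIota lam c b) z + envIota lam c b (b z) := by
  have hmul :
      mul₂ (envIota lam c b) = (RingQuot.mkAlgHom K (envRel lam c b)).toLinearMap ∘ₗ tensMul :=
    TensorProduct.ext' fun v w => by simp [envIota, tensMul]
  have h := RingQuot.mkAlgHom_rel K (show envRel lam c b _ _ from ⟨z, rfl, rfl⟩)
  rw [hmul]
  simpa [envIota] using h

theorem generalized_lie_of_envIota_injective_mark_one
    (c : V ⊗[K] V →ₗ[K] V ⊗[K] V) (hbraid : BraidEq c) (hHecke : IsHecke (1 : K) c)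
    (b : V ⊗[K] V →ₗ[K] V) (hb : IsBracket c b)
    (hinj : Function.Injective (envIota (1 : K) c b)) :
    b ∘ₗ c = -b ∧
    b ∘ₗ opB1 b ∘ₗ (LinearMap.id - opC2 c + opC2 c ∘ₗ opC1 c) = 0 := by
  have hrel := mul₂_envIota_apply (1 : K) c b
  have hbc : b ∘ₗ c = -b := ext fun z => hinj <| by
    simpa using hHecke.map_bracket_braiding_eq_neg hrel z
  have hcc : ∀ z, c (c z) = z := fun z => by simpa using hHecke.apply_apply z
  simp only [one_smul] at hrel
  exact ⟨hbc, ext fun y => (map_eq_zero_iff _ hinj).1 <| by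
    simpa using hbraid.map_bracket_jacobi hcc hb hbc hrel y⟩
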